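/- arXiv:2311.00355 — 2 statements merged into one kernel-verified Lean document; each statement's English description precedes it below -/
import Mathlib

section
/- Let ℂ[ε] := ℂ[ε]/(ε²) be the ring of dual numbers over ℂ and let τ : ℂ[ε] → ℂ be the linear functional τ(x + yε) = y. Let g be the ℂ-vector space of finitely supported functions from ℤ² \ {(0,0)} to ℂ[ε] — writing w^{a,b}_γ for the function supported at (a,b) ∈ ℤ² \ {(0,0)} with value γ ∈ ℂ[ε] — together with two further basis vectors c_s and c_t. Then the bilinear bracket determined by [w^{a,b}_γ, w^{c,d}_η] = −(ad−bc)·w^{a+c,b+d}_{γη} + δ_{a+c,0}·δ_{b+d,0}·τ(γη)·(a·c_s + b·c_t) (the first term being interpreted as 0 when (a+c,b+d) = (0,0), which is automatic since its coefficient then vanishes) and by declaring c_s and c_t central is antisymmetric and satisfies the Jacobi identity; that is, this bracket makes g a Lie algebra over ℂ. -/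
/-- Index set `ℤ² \ {(0,0)}` for the generators `w^{a,b}_γ`. -/
abbrev GTEIdx : Type := {p : ℤ × ℤ // p ≠ 0}

/-- The underlying vector space of the (even part of the) Lie algebra `g_{T*E}`:
finitely supported functions `ℤ² \ {(0,0)} → ℂ[ε]` together with a two-dimensional
central part spanned by `c_s` and `c_t`. -/
abbrev GTE : Type := (GTEIdx →₀ DualNumber ℂ) × (ℂ × ℂ)

/-- The generator `w^{a,b}_γ`: the function supported at `(a,b)` with value `γ ∈ ℂ[ε]`. -/
noncomputable def wgen (p : GTEIdx) (γ : DualNumber ℂ) : GTE := (Finsupp.single p γ, 0)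

/-- The central element `c_s`. -/
def cs : GTE := (0, (1, 0))

/-- The central element `c_t`. -/
def ct : GTE := (0, (0, 1))

/-- The linear functional `τ(x + yε) = y` on the dual numbers. -/
def tauDN (x : DualNumber ℂ) : ℂ := TrivSqZeroExt.snd x

/-- The bilinear bracket determined by
`[w^{a,b}_γ, w^{c,d}_η] = −(ad−bc)·w^{a+c,b+d}_{γη} + δ_{a+c,0}·δ_{b+d,0}·τ(γη)·(a·c_s + b·c_t)`,
with `c_s` and `c_t` central; the first term is interpreted as `0` when `(a+c,b+d) = (0,0)`
(automatic, since its coefficient then vanishes). -/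
noncomputable def gteBracket (x y : GTE) : GTE :=
  ( x.1.sum fun a γ => y.1.sum fun b η =>
      if h : a.1 + b.1 ≠ 0 then
        Finsupp.single (⟨a.1 + b.1, h⟩ : GTEIdx)
          ((-(a.1.1 * b.1.2 - a.1.2 * b.1.1)) • (γ * η))
      else 0,
    x.1.sum fun a γ => y.1.sum fun b η =>
      if a.1 + b.1 = 0 then
        tauDN (γ * η) • (((a.1.1 : ℂ), (a.1.2 : ℂ)) : ℂ × ℂ)
      else 0 )


/-!
The bracket depends only on the loop components and is the bilinear extension of its values on
generators, `[w^a_γ, w^b_η] = bracketGen a b (γ * η)` with `bracketGen a b` linear. Bilinearity is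
then automatic, and antisymmetry and the Jacobi identity reduce to generators, the Jacobi expression
being additive in its first argument and cyclically symmetric. On generators antisymmetry is
`cross b a = -cross a b` together with commutativity of `ℂ[ε]`. For Jacobi, all three terms are
multiples of `γηθ` placed at `p + q + r`: the loop coefficients cancel by the Jacobi identity for
the structure constants `cross a b`, and when `p + q + r = 0` the three cross products `cross q r`,
`cross r p`, `cross p q` coincide, so the central terms add up to a multiple of `p + q + r`.
-/

namespace GTE

open Finsupp

def cross (a b : ℤ × ℤ) : ℤ := a.1 * b.2 - a.2 * b.1

lemma cross_swap (a b : ℤ × ℤ) : cross b a = -cross a b := by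
  simp only [cross]; ring

lemma cross_jacobi (p q r : ℤ × ℤ) :
    cross q r * cross p (q + r) + cross r p * cross q (r + p)
      + cross p q * cross r (p + q) = 0 := by
  simp only [cross, Prod.fst_add, Prod.snd_add]; ring

/-- `w^s` as a linear map in the coefficient, extended by zero to `s = 0`. -/
noncomputable def loopSingle (s : ℤ × ℤ) : DualNumber ℂ →ₗ[ℂ] GTEIdx →₀ DualNumber ℂ :=
  if h : s ≠ 0 then lsingle ⟨s, h⟩ else 0

noncomputable def centralPart (s a : ℤ × ℤ) : DualNumber ℂ →ₗ[ℂ] ℂ × ℂ :=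
  if s = 0 then (TrivSqZeroExt.sndHom ℂ ℂ).smulRight ((a.1 : ℂ), (a.2 : ℂ)) else 0

noncomputable def bracketGen (a b : ℤ × ℤ) : DualNumber ℂ →ₗ[ℂ] GTE :=
  ((-cross a b) • loopSingle (a + b)).prod (centralPart (a + b) a)

noncomputable def bracketBilin :
    (GTEIdx →₀ DualNumber ℂ) →ₗ[ℂ] (GTEIdx →₀ DualNumber ℂ) →ₗ[ℂ] GTE :=
  lsum ℂ fun a => (lsum ℂ).toLinearMap ∘ₗ LinearMap.pi fun b =>
    (LinearMap.mul ℂ (DualNumber ℂ)).compr₂ (bracketGen a.1 b.1)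

lemma bracketGen_apply (a b : ℤ × ℤ) (ν : DualNumber ℂ) :
    bracketGen a b ν =
      ( if h : a + b ≠ 0 then single ⟨a + b, h⟩ ((-cross a b) • ν) else 0,
        if a + b = 0 then tauDN ν • ((a.1 : ℂ), (a.2 : ℂ)) else 0 ) := by
  simp only [bracketGen, loopSingle, centralPart]
  split_ifs <;> simp [tauDN]

lemma fst_bracketGen (a b : ℤ × ℤ) (ν : DualNumber ℂ) :
    (bracketGen a b ν).1 = (-cross a b) • loopSingle (a + b) ν := rfl

lemma bracketBilin_apply (f g : GTEIdx →₀ DualNumber ℂ) :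
    bracketBilin f g = f.sum fun a γ => g.sum fun b η => bracketGen a b (γ * η) := by
  simp only [bracketBilin, lsum_apply, LinearMap.coe_comp, LinearEquiv.coe_coe,
    LinearMap.finsupp_sum_apply, Function.comp_apply, LinearMap.pi_apply]
  rfl

lemma gteBracket_eq (x y : GTE) : gteBracket x y = bracketBilin x.1 y.1 := by
  refine Prod.ext ?_ ?_ <;>
    simp only [bracketBilin_apply, bracketGen_apply, Finsupp.sum, Prod.fst_sum, Prod.snd_sum] <;>
    rfl

lemma bracketBilin_single_single (a b : GTEIdx) (γ η : DualNumber ℂ) :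
    bracketBilin (single a γ) (single b η) = bracketGen a.1 b.1 (γ * η) := by
  simp [bracketBilin]

lemma bracketGen_swap (a b : ℤ × ℤ) : bracketGen b a = -bracketGen a b := by
  ext ν : 1
  rw [LinearMap.neg_apply, bracketGen_apply, bracketGen_apply, add_comm b a, cross_swap,
    Prod.neg_mk]
  congr 1
  · split_ifs <;> simp
  · split_ifs with h
    · obtain rfl : b = -a := eq_neg_of_add_eq_zero_right h
      ext <;> simp
    · simp

lemma bracketBilin_swap (f g : GTEIdx →₀ DualNumber ℂ) : bracketBilin f g = -bracketBilin g f := by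
  induction f using induction_linear generalizing g with
  | zero => simp
  | add f f' hf hf' => simp [hf, hf', add_comm]
  | single a γ =>
    induction g using induction_linear with
    | zero => simp
    | add g g' hg hg' => simp [hg, hg', add_comm]
    | single b η => rw [bracketBilin_single_single, bracketBilin_single_single, bracketGen_swap,
      LinearMap.neg_apply, mul_comm]

lemma bracketGen_jacobi (p q r : ℤ × ℤ) (ν : DualNumber ℂ) :
    (-cross q r) • bracketGen p (q + r) ν + (-cross r p) • bracketGen q (r + p) ν
      + (-cross p q) • bracketGen r (p + q) ν = 0 := by
  have hq : q + (r + p) = p + (q + r) := by abel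
  have hr : r + (p + q) = p + (q + r) := by abel
  simp only [bracketGen_apply, hq, hr, Prod.smul_mk, Prod.mk_add_mk]
  by_cases hs : p + (q + r) = 0
  · obtain rfl : r = -(p + q) := by rw [← sub_eq_zero, ← hs]; abel
    refine Prod.ext (by simp) (Prod.ext ?_ ?_) <;>
      simp only [hs, if_true, Prod.smul_mk, Prod.mk_add_mk, smul_eq_mul, zsmul_eq_mul, cross,
        Prod.fst_add, Prod.snd_add, Prod.fst_neg, Prod.snd_neg, Prod.fst_zero, Prod.snd_zero,
        Int.cast_sub, Int.cast_mul, Int.cast_add, Int.cast_neg] <;>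
      ring
  · simp only [hs, ne_eq, not_false_eq_true, dif_pos, if_false, smul_zero, add_zero, smul_single,
      smul_smul, ← single_add, ← add_smul]
    have hc : -cross q r * -cross p (q + r) + -cross r p * -cross q (r + p)
        + -cross p q * -cross r (p + q) = 0 := by linear_combination cross_jacobi p q r
    rw [hc, zero_smul, single_zero, Prod.mk_zero_zero]

lemma bracketBilin_single_loopSingle (p : GTEIdx) (s : ℤ × ℤ) (γ ν : DualNumber ℂ) :
    bracketBilin (single p γ) (loopSingle s ν) = bracketGen p s (γ * ν) := by
  by_cases hs : s = 0
  · subst hs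
    simp [loopSingle, bracketGen_apply, cross, p.2, Prod.mk_zero_zero]
  · simp [loopSingle, hs, bracketBilin_single_single]

lemma bracketBilin_single_bracketBilin_single_single (p q r : GTEIdx) (γ η θ : DualNumber ℂ) :
    bracketBilin (single p γ) (bracketBilin (single q η) (single r θ)).1
      = (-cross q r) • bracketGen p (q + r) (γ * η * θ) := by
  rw [bracketBilin_single_single, fst_bracketGen, map_zsmul,
    bracketBilin_single_loopSingle, mul_assoc]

noncomputable def jacobiator (f g h : GTEIdx →₀ DualNumber ℂ) : GTE :=
  bracketBilin f (bracketBilin g h).1 + bracketBilin g (bracketBilin h f).1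
    + bracketBilin h (bracketBilin f g).1

lemma jacobiator_cycle (f g h : GTEIdx →₀ DualNumber ℂ) : jacobiator f g h = jacobiator g h f := by
  simp only [jacobiator]; abel

lemma jacobiator_zero_left (g h : GTEIdx →₀ DualNumber ℂ) : jacobiator 0 g h = 0 := by
  simp [jacobiator]

lemma jacobiator_add_left (f f' g h : GTEIdx →₀ DualNumber ℂ) :
    jacobiator (f + f') g h = jacobiator f g h + jacobiator f' g h := by
  simp only [jacobiator, map_add, LinearMap.add_apply, Prod.fst_add]; abel

lemma jacobiator_single (p q r : GTEIdx) (γ η θ : DualNumber ℂ) :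
    jacobiator (single p γ) (single q η) (single r θ) = 0 := by
  simp only [jacobiator, bracketBilin_single_bracketBilin_single_single]
  rw [show η * θ * γ = γ * η * θ by ring, show θ * γ * η = γ * η * θ by ring]
  exact bracketGen_jacobi _ _ _ _

lemma jacobiator_eq_zero (f g h : GTEIdx →₀ DualNumber ℂ) : jacobiator f g h = 0 := by
  induction f using induction_linear generalizing g h with
  | zero => exact jacobiator_zero_left g h
  | add f f' hf hf' => rw [jacobiator_add_left, hf, hf', add_zero]
  | single p γ =>
    rw [jacobiator_cycle]
    induction g using induction_linear generalizing h with
    | zero => exact jacobiator_zero_left h _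
    | add g g' hg hg' => rw [jacobiator_add_left, hg, hg', add_zero]
    | single q η =>
      rw [jacobiator_cycle]
      induction h using induction_linear with
      | zero => exact jacobiator_zero_left _ _
      | add h h' hh hh' => rw [jacobiator_add_left, hh, hh', add_zero]
      | single r θ => rw [jacobiator_cycle]; exact jacobiator_single p q r γ η θ

end GTE

/-- The bracket on `g_{T*E}` is `ℂ`-bilinear, antisymmetric and satisfies the Jacobi
identity; that is, it makes `g_{T*E}` a Lie algebra over `ℂ`. -/
theorem gteBracket_isLieAlgebra :
    (∀ x y z : GTE, gteBracket (x + y) z = gteBracket x z + gteBracket y z) ∧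
    (∀ x y z : GTE, gteBracket x (y + z) = gteBracket x y + gteBracket x z) ∧
    (∀ (c : ℂ) (x y : GTE), gteBracket (c • x) y = c • gteBracket x y) ∧
    (∀ (c : ℂ) (x y : GTE), gteBracket x (c • y) = c • gteBracket x y) ∧
    (∀ x y : GTE, gteBracket x y = -gteBracket y x) ∧
    (∀ x y z : GTE,
      gteBracket x (gteBracket y z) + gteBracket y (gteBracket z x)
        + gteBracket z (gteBracket x y) = 0) := by
  refine ⟨fun x y z => ?_, fun x y z => ?_, fun c x y => ?_, fun c x y => ?_, fun x y => ?_,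
    fun x y z => ?_⟩ <;>
    simp only [GTE.gteBracket_eq, Prod.fst_add, Prod.smul_fst, map_add, map_smul,
      LinearMap.add_apply, LinearMap.smul_apply]
  · exact GTE.bracketBilin_swap x.1 y.1
  · exact GTE.jacobiator_eq_zero x.1 y.1 z.1
end

section
/- Let k be a field, n ≥ 0, let J ∈ M_{n+1}(k) be the nilpotent Jordan block with J_{i,i+1} = 1 for 1 ≤ i ≤ n and all other entries 0, and let A = diag(A₀, …, A_n) be diagonal. Then the block matrix M = (J A; 0 J) ∈ M_{2(n+1)}(k) is similar to the block-diagonal matrix (J 0; 0 J) if and only if A₀ + A₁ + ⋯ + A_n = 0. -/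
/-- The `(n+1) × (n+1)` nilpotent Jordan block `J`, with `J_{i,i+1} = 1` and all
other entries `0`. -/
def jordanNilBlock (k : Type*) [Field k] (n : ℕ) :
    Matrix (Fin (n + 1)) (Fin (n + 1)) k :=
  Matrix.of fun i j => if (i : ℕ) + 1 = (j : ℕ) then 1 else 0

/-!
Write `M = (J D; 0 J)` with `D = diagonal A`. The upper right block of `M ^ (n + 1)` is
`∑_{a + b = n} J^a D J^b`, whose `(0, n)` entry is `A₀ + ⋯ + A_n`. Conjugacy to `(J 0; 0 J)`,
which is nilpotent of index `n + 1`, forces `M ^ (n + 1) = 0` and hence this sum to vanish.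
Conversely, if the sum vanishes then `D = J B - B J` for the subdiagonal matrix `B` with
`B_{i+1,i} = A₀ + ⋯ + A_i`, and `(1 B; 0 1)` conjugates `M` to `(J 0; 0 J)`.
-/

open Finset

namespace Matrix

variable {m n α : Type*} [Fintype m] [Fintype n] [DecidableEq m] [DecidableEq n]

theorem fromBlocks_zero₂₁_pow_succ [Semiring α] (X : Matrix m m α) (D : Matrix m n α)
    (Y : Matrix n n α) (k : ℕ) :
    fromBlocks X D 0 Y ^ (k + 1) =
      fromBlocks (X ^ (k + 1)) (∑ p ∈ antidiagonal k, X ^ p.1 * D * Y ^ p.2) 0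
        (Y ^ (k + 1)) := by
  induction k with
  | zero => simp
  | succ k ih =>
    rw [pow_succ, ih, fromBlocks_multiply, Nat.sum_antidiagonal_succ']
    simp [pow_succ, Matrix.mul_assoc, Matrix.sum_mul]

theorem isConj_fromBlocks_of_add_mul_eq_mul [Ring α] {X : Matrix m m α} {Y : Matrix n n α}
    {D B : Matrix m n α} (h : D + B * Y = X * B) :
    IsConj (fromBlocks X D 0 Y) (fromBlocks X 0 0 Y) := by
  refine ⟨⟨fromBlocks 1 B 0 1, fromBlocks 1 (-B) 0 1, ?_, ?_⟩, ?_⟩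
  · simp [fromBlocks_multiply, ← fromBlocks_one]
  · simp [fromBlocks_multiply, ← fromBlocks_one]
  · simp [SemiconjBy, fromBlocks_multiply, h]

end Matrix

theorem eq_zero_of_isConj_zero {M₀ : Type*} [MonoidWithZero M₀] {a : M₀} (h : IsConj a 0) :
    a = 0 := by
  obtain ⟨c, hc⟩ := h
  exact (Units.mul_right_eq_zero c).mp (by simpa [SemiconjBy] using hc)

theorem Fin.partialSum_last {M : Type*} [AddCommMonoid M] {n : ℕ} (f : Fin n → M) :
    Fin.partialSum f (Fin.last n) = ∑ i, f i := by
  rw [Fin.partialSum, Fin.val_last, List.take_of_length_le (by simp), List.sum_ofFn]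

section JordanNilBlock

open Matrix

variable {k : Type*} [Field k] {n : ℕ}

theorem mul_jordanNilBlock_apply (M : Matrix (Fin (n + 1)) (Fin (n + 1)) k) (i j : Fin (n + 1)) :
    (M * jordanNilBlock k n) i j = if h : 0 < (j : ℕ) then M i ⟨j - 1, by omega⟩ else 0 := by
  simp only [mul_apply, jordanNilBlock, of_apply, mul_ite, mul_one, mul_zero]
  split_ifs with h
  · rw [Finset.sum_eq_single ⟨j - 1, by omega⟩] <;> intros <;> simp_all [Fin.ext_iff] <;> omega
  · exact Finset.sum_eq_zero fun c _ => if_neg (by omega)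

theorem jordanNilBlock_mul_apply (M : Matrix (Fin (n + 1)) (Fin (n + 1)) k) (i j : Fin (n + 1)) :
    (jordanNilBlock k n * M) i j = if h : (i : ℕ) + 1 < n + 1 then M ⟨i + 1, h⟩ j else 0 := by
  simp only [mul_apply, jordanNilBlock, of_apply, ite_mul, one_mul, zero_mul]
  split_ifs with h
  · rw [Finset.sum_eq_single ⟨i + 1, h⟩] <;> intros <;> simp_all [Fin.ext_iff]; omega
  · exact Finset.sum_eq_zero fun c _ => if_neg (by omega)

theorem jordanNilBlock_pow_apply (a : ℕ) (i j : Fin (n + 1)) :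
    (jordanNilBlock k n ^ a) i j = if (i : ℕ) + a = j then 1 else 0 := by
  induction a generalizing j with
  | zero => simp [one_apply, Fin.ext_iff]
  | succ a ih =>
    rw [pow_succ, mul_jordanNilBlock_apply]
    split_ifs <;> simp_all <;> omega

theorem jordanNilBlock_pow_succ : jordanNilBlock k n ^ (n + 1) = 0 := by
  ext i j
  rw [jordanNilBlock_pow_apply, if_neg (by omega), Matrix.zero_apply]

theorem jordanNilBlock_pow_mul_diagonal_mul_pow_apply (A : Fin (n + 1) → k) (i : Fin (n + 1)) :
    (jordanNilBlock k n ^ (i : ℕ) * diagonal A * jordanNilBlock k n ^ (n - i)) 0 (Fin.last n)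
      = A i := by
  rw [mul_apply, Finset.sum_eq_single i]
  · simp [mul_diagonal, jordanNilBlock_pow_apply, Nat.add_sub_cancel' i.is_le]
  · intro c _ hc
    simp [mul_diagonal, jordanNilBlock_pow_apply]
    omega
  · simp


theorem exists_diagonal_add_mul_jordanNilBlock_eq_mul {A : Fin (n + 1) → k}
    (hA : ∑ i, A i = 0) :
    ∃ B, diagonal A + B * jordanNilBlock k n = jordanNilBlock k n * B := by
  set B : Matrix (Fin (n + 1)) (Fin (n + 1)) k :=
    of fun i j => if (j : ℕ) + 1 = i then Fin.partialSum A i.castSucc else 0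
  have hBJ (i : Fin (n + 1)) : (B * jordanNilBlock k n) i i = Fin.partialSum A i.castSucc := by
    rw [mul_jordanNilBlock_apply]
    split_ifs with hi
    · simp [B, Nat.sub_add_cancel hi]
    · obtain rfl : i = 0 := Fin.ext (by simp only [Fin.val_zero]; omega)
      simp
  have hJB (i : Fin (n + 1)) : (jordanNilBlock k n * B) i i = Fin.partialSum A i.succ := by
    rw [jordanNilBlock_mul_apply]
    split_ifs with hi
    · exact if_pos rfl
    · obtain rfl : i = Fin.last n := Fin.ext (by simp only [Fin.val_last]; omega)
      rw [Fin.succ_last, Fin.partialSum_last, hA]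
  refine ⟨B, ?_⟩
  ext i j
  rcases eq_or_ne i j with rfl | hij
  · rw [Matrix.add_apply, diagonal_apply_eq, hBJ, hJB, Fin.partialSum_succ, add_comm]
  · have hij' : (i : ℕ) ≠ j := Fin.val_ne_iff.mpr hij
    rw [Matrix.add_apply, mul_jordanNilBlock_apply, jordanNilBlock_mul_apply,
      diagonal_apply_ne _ hij]
    simp only [B, of_apply, zero_add]
    split_ifs <;> first | rfl | omega

theorem fromBlocks_jordanNilBlock_pow_apply (A : Fin (n + 1) → k) :
    (fromBlocks (jordanNilBlock k n) (diagonal A) 0 (jordanNilBlock k n) ^ (n + 1))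
      (Sum.inl 0) (Sum.inr (Fin.last n)) = ∑ i, A i := by
  rw [fromBlocks_zero₂₁_pow_succ, fromBlocks_apply₁₂, Matrix.sum_apply,
    Nat.sum_antidiagonal_eq_sum_range_succ
      (fun a b => (jordanNilBlock k n ^ a * diagonal A * jordanNilBlock k n ^ b) 0 (Fin.last n)),
    ← Fin.sum_univ_eq_sum_range]
  exact sum_congr rfl fun i _ => jordanNilBlock_pow_mul_diagonal_mul_pow_apply A i

end JordanNilBlock

/-- The block matrix `M = (J A; 0 J)`, with `J` the nilpotent Jordan block and
`A = diag(A₀, …, A_n)`, is similar to the block-diagonal matrix `(J 0; 0 J)` if and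
only if `A₀ + A₁ + ⋯ + A_n = 0`. -/
theorem jordan_block_extension_splits_iff {k : Type*} [Field k] (n : ℕ)
    (A : Fin (n + 1) → k) :
    IsConj
        (Matrix.fromBlocks (jordanNilBlock k n) (Matrix.diagonal A) 0 (jordanNilBlock k n))
        (Matrix.fromBlocks (jordanNilBlock k n) 0 0 (jordanNilBlock k n))
      ↔ ∑ i, A i = 0 := by
  constructor
  · intro h
    have hM : Matrix.fromBlocks (jordanNilBlock k n) (Matrix.diagonal A) 0
        (jordanNilBlock k n) ^ (n + 1) = 0 :=
      eq_zero_of_isConj_zero <| by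
        simpa [Matrix.fromBlocks_zero₂₁_pow_succ, jordanNilBlock_pow_succ] using h.pow (n + 1)
    rw [← fromBlocks_jordanNilBlock_pow_apply, hM, Matrix.zero_apply]
  · intro hA
    obtain ⟨B, hB⟩ := exists_diagonal_add_mul_jordanNilBlock_eq_mul hA
    exact Matrix.isConj_fromBlocks_of_add_mul_eq_mul hB
end
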